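/- Let a, b ∈ ℝ and k ≥ 1 an integer. Then |a^k − b^k| ≤ k |a − b| (|b| + |a − b|)^{k−1}, and consequently for vectors W, W₀ ∈ ℝ^m, (1/m) Σ_i (W_i^k − (W₀)_i^k)^4 ≤ C(k) [ ((1/m)‖W − W₀‖₂^8 · (1/m) Σ_i |(W₀)_i|^{8k−8})^{1/2} + (1/m)‖W − W₀‖₂^{4k} ] for a constant C(k) depending only on k. -/
import Mathlib

open scoped BigOperators
open Finset

private lemma aux_abs_pow_sub (k : ℕ) (hk : 1 ≤ k) (a b : ℝ) :
    |a ^ k - b ^ k| ≤ k * |a - b| * (|b| + |a - b|) ^ (k - 1) := by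
  set M : ℝ := |b| + |a - b| with hMdef
  have hterm : ∀ i ∈ Finset.range k, |a ^ i * b ^ (k - 1 - i)| ≤ M ^ (k - 1) := by
    intro i hi
    have hi' : i < k := Finset.mem_range.mp hi
    have ha : |a| ≤ M := by
      have : a = b + (a - b) := by ring
      calc |a| = |b + (a - b)| := by rw [← this]
        _ ≤ |b| + |a - b| := abs_add_le _ _
    have hb : |b| ≤ M := le_add_of_nonneg_right (abs_nonneg _)
    calc |a ^ i * b ^ (k - 1 - i)| = |a| ^ i * |b| ^ (k - 1 - i) := by
          rw [abs_mul, abs_pow, abs_pow]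
      _ ≤ M ^ i * M ^ (k - 1 - i) :=
          mul_le_mul (pow_le_pow_left₀ (abs_nonneg _) ha i)
            (pow_le_pow_left₀ (abs_nonneg _) hb _) (by positivity)
            (pow_nonneg (le_trans (abs_nonneg _) ha) i)
      _ = M ^ (k - 1) := by rw [← pow_add]; congr 1; omega
  calc |a ^ k - b ^ k|
      = |(∑ i ∈ Finset.range k, a ^ i * b ^ (k - 1 - i))| * |a - b| := by
        rw [← abs_mul, geom_sum₂_mul]
    _ ≤ (∑ i ∈ Finset.range k, |a ^ i * b ^ (k - 1 - i)|) * |a - b| :=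
        mul_le_mul_of_nonneg_right (Finset.abs_sum_le_sum_abs _ _) (abs_nonneg _)
    _ ≤ (∑ _i ∈ Finset.range k, M ^ (k - 1)) * |a - b| :=
        mul_le_mul_of_nonneg_right (Finset.sum_le_sum hterm) (abs_nonneg _)
    _ = k * M ^ (k - 1) * |a - b| := by
        rw [Finset.sum_const, Finset.card_range, nsmul_eq_mul]
    _ = k * |a - b| * M ^ (k - 1) := by ring

private lemma aux_sum_pow {ι : Type*} (s : Finset ι) (f : ι → ℝ) (hf : ∀ i ∈ s, 0 ≤ f i)
    (n : ℕ) (hn : 1 ≤ n) : ∑ i ∈ s, f i ^ n ≤ (∑ i ∈ s, f i) ^ n := by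
  obtain ⟨p, rfl⟩ : ∃ p, n = p + 1 := ⟨n - 1, by omega⟩
  have hS : ∀ i ∈ s, f i ≤ ∑ j ∈ s, f j := fun i hi => Finset.single_le_sum hf hi
  have hS0 : 0 ≤ ∑ j ∈ s, f j := Finset.sum_nonneg hf
  calc ∑ i ∈ s, f i ^ (p + 1) = ∑ i ∈ s, f i * f i ^ p := by
        simp [pow_succ, mul_comm]
    _ ≤ ∑ i ∈ s, f i * (∑ j ∈ s, f j) ^ p := by
        refine Finset.sum_le_sum fun i hi => ?_
        exact mul_le_mul_of_nonneg_left (pow_le_pow_left₀ (hf i hi) (hS i hi) p) (hf i hi)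
    _ = (∑ j ∈ s, f j) * (∑ j ∈ s, f j) ^ p := by rw [← Finset.sum_mul]
    _ = (∑ j ∈ s, f j) ^ (p + 1) := by rw [pow_succ]; ring

private lemma aux_ptwise (k : ℕ) (hk : 1 ≤ k) (a b : ℝ) :
    (a ^ k - b ^ k) ^ 4 ≤
      (k : ℝ) ^ 4 * 2 ^ (4 * k - 4) *
        ((a - b) ^ 4 * |b| ^ (4 * k - 4) + ((a - b) ^ 2) ^ (2 * k)) := by
  set d : ℝ := |a - b| with hddef
  have hd : 0 ≤ d := abs_nonneg _
  set M : ℝ := |b| + d with hMdef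
  have hM0 : 0 ≤ M := add_nonneg (abs_nonneg _) hd
  have h1 : |a ^ k - b ^ k| ≤ (k : ℝ) * d * M ^ (k - 1) := aux_abs_pow_sub k hk a b
  have h2 : (a ^ k - b ^ k) ^ 4 ≤ ((k : ℝ) * d * M ^ (k - 1)) ^ 4 := by
    calc (a ^ k - b ^ k) ^ 4 = |a ^ k - b ^ k| ^ 4 := by
          rw [pow_abs, abs_of_nonneg (by positivity)]
      _ ≤ ((k : ℝ) * d * M ^ (k - 1)) ^ 4 := pow_le_pow_left₀ (abs_nonneg _) h1 4
  have h3 : ((k : ℝ) * d * M ^ (k - 1)) ^ 4 = (k : ℝ) ^ 4 * d ^ 4 * M ^ (4 * k - 4) := by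
    rw [mul_pow, mul_pow, ← pow_mul]
    congr 2
    omega
  have hMbound : M ^ (4 * k - 4) ≤ 2 ^ (4 * k - 4) * (|b| ^ (4 * k - 4) + d ^ (4 * k - 4)) := by
    set n := 4 * k - 4
    have hmax : M ≤ 2 * max |b| d := by
      have h1 : |b| ≤ max |b| d := le_max_left _ _
      have h2 : d ≤ max |b| d := le_max_right _ _
      rw [hMdef]; linarith
    have hmn : (max |b| d) ^ n ≤ |b| ^ n + d ^ n := by
      rcases max_cases |b| d with ⟨h, _⟩ | ⟨h, _⟩ <;> rw [h]
      · exact le_add_of_nonneg_right (pow_nonneg hd _)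
      · exact le_add_of_nonneg_left (pow_nonneg (abs_nonneg _) _)
    calc M ^ n ≤ (2 * max |b| d) ^ n := pow_le_pow_left₀ hM0 hmax n
      _ = 2 ^ n * (max |b| d) ^ n := mul_pow _ _ _
      _ ≤ 2 ^ n * (|b| ^ n + d ^ n) := by
          have : (0:ℝ) ≤ 2 ^ n := by positivity
          exact mul_le_mul_of_nonneg_left hmn this
  have hd4 : d ^ 4 = (a - b) ^ 4 := by rw [hddef, pow_abs, abs_of_nonneg (by positivity)]
  have hdk : d ^ 4 * d ^ (4 * k - 4) = ((a - b) ^ 2) ^ (2 * k) := by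
    rw [← pow_add, show 4 + (4 * k - 4) = 4 * k by omega, hddef, ← sq_abs (a - b), ← pow_mul]
    congr 1
    omega
  calc (a ^ k - b ^ k) ^ 4 ≤ (k : ℝ) ^ 4 * d ^ 4 * M ^ (4 * k - 4) := h3 ▸ h2
    _ ≤ (k : ℝ) ^ 4 * d ^ 4 * (2 ^ (4 * k - 4) * (|b| ^ (4 * k - 4) + d ^ (4 * k - 4))) := by
        have : (0:ℝ) ≤ (k : ℝ) ^ 4 * d ^ 4 := by positivity
        exact mul_le_mul_of_nonneg_left hMbound this
    _ = (k : ℝ) ^ 4 * 2 ^ (4 * k - 4) *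
          (d ^ 4 * |b| ^ (4 * k - 4) + d ^ 4 * d ^ (4 * k - 4)) := by ring
    _ = (k : ℝ) ^ 4 * 2 ^ (4 * k - 4) *
          ((a - b) ^ 4 * |b| ^ (4 * k - 4) + ((a - b) ^ 2) ^ (2 * k)) := by rw [hdk, hd4]

/-- (i) `|a^k - b^k| ≤ k |a-b| (|b| + |a-b|)^{k-1}`, and (ii) the resulting empirical
bound: there is `C = C(k)` such that for every width `m` and vectors `W, W₀ ∈ ℝ^m`,
`(1/m) ∑ (W_i^k - W₀ᵢ^k)^4 ≤ C [ ((1/m)‖W-W₀‖₂^8 (1/m)∑|W₀ᵢ|^{8k-8})^{1/2} + (1/m)‖W-W₀‖₂^{4k} ]`. -/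
theorem pow_diff_bounds (k : ℕ) (hk : 1 ≤ k) :
    (∀ a b : ℝ, |a ^ k - b ^ k| ≤ k * |a - b| * (|b| + |a - b|) ^ (k - 1)) ∧
    ∃ C : ℝ, ∀ (m : ℕ), 0 < m → ∀ W W₀ : Fin m → ℝ,
      (1 / (m : ℝ)) * ∑ i, (W i ^ k - W₀ i ^ k) ^ 4 ≤
        C * (Real.sqrt ((1 / (m : ℝ)) * Real.sqrt (∑ i, (W i - W₀ i) ^ 2) ^ 8 *
              ((1 / (m : ℝ)) * ∑ i, |W₀ i| ^ (8 * k - 8))) +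
            (1 / (m : ℝ)) * Real.sqrt (∑ i, (W i - W₀ i) ^ 2) ^ (4 * k)) := by
  constructor
  · exact aux_abs_pow_sub k hk
  · refine ⟨(k : ℝ) ^ 4 * 2 ^ (4 * k - 4), fun m hm W W₀ => ?_⟩
    set K : ℝ := (k : ℝ) ^ 4 * 2 ^ (4 * k - 4) with hKdef
    have hK0 : 0 ≤ K := by positivity
    have hm0 : (0:ℝ) < (m:ℝ) := by exact_mod_cast hm
    set S : ℝ := ∑ i, (W i - W₀ i) ^ 2 with hSdef
    have hS0 : 0 ≤ S := Finset.sum_nonneg fun i _ => sq_nonneg _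
    set T : ℝ := ∑ i, |W₀ i| ^ (8 * k - 8) with hTdef
    have hT0 : 0 ≤ T := Finset.sum_nonneg fun i _ => by positivity
    set A : ℝ := ∑ i, (W i - W₀ i) ^ 4 * |W₀ i| ^ (4 * k - 4) with hAdef
    set B : ℝ := ∑ i, ((W i - W₀ i) ^ 2) ^ (2 * k) with hBdef
    -- pointwise sum bound
    have hsum : ∑ i, (W i ^ k - W₀ i ^ k) ^ 4 ≤ K * (A + B) := by
      calc ∑ i, (W i ^ k - W₀ i ^ k) ^ 4
          ≤ ∑ i, K * ((W i - W₀ i) ^ 4 * |W₀ i| ^ (4 * k - 4) +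
              ((W i - W₀ i) ^ 2) ^ (2 * k)) :=
            Finset.sum_le_sum fun i _ => aux_ptwise k hk (W i) (W₀ i)
        _ = K * (A + B) := by
            rw [← Finset.mul_sum, hAdef, hBdef, Finset.sum_add_distrib]
    -- Cauchy-Schwarz for A
    have hCS : A ≤ Real.sqrt (S ^ 4 * T) := by
      have h1 : A ^ 2 ≤ (∑ i, ((W i - W₀ i) ^ 4) ^ 2) * ∑ i, (|W₀ i| ^ (4 * k - 4)) ^ 2 :=
        Finset.sum_mul_sq_le_sq_mul_sq _ _ _
      have h2 : ∑ i, ((W i - W₀ i) ^ 4) ^ 2 ≤ S ^ 4 := by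
        have := aux_sum_pow Finset.univ (fun i => (W i - W₀ i) ^ 2)
          (fun i _ => sq_nonneg _) 4 (by norm_num)
        calc ∑ i, ((W i - W₀ i) ^ 4) ^ 2 = ∑ i, ((W i - W₀ i) ^ 2) ^ 4 := by
              apply Finset.sum_congr rfl; intro i _; ring
          _ ≤ S ^ 4 := this
      have h3 : ∑ i, (|W₀ i| ^ (4 * k - 4)) ^ 2 = T := by
        rw [hTdef]
        apply Finset.sum_congr rfl
        intro i _
        rw [← pow_mul]
        congr 1
        omega
      have hA0 : 0 ≤ A := Finset.sum_nonneg fun i _ => by positivity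
      have h4 : A ^ 2 ≤ S ^ 4 * T := by
        calc A ^ 2 ≤ (∑ i, ((W i - W₀ i) ^ 4) ^ 2) * ∑ i, (|W₀ i| ^ (4 * k - 4)) ^ 2 := h1
          _ ≤ S ^ 4 * T := by
              rw [h3]
              exact mul_le_mul_of_nonneg_right h2 hT0
      calc A = Real.sqrt (A ^ 2) := by rw [Real.sqrt_sq hA0]
        _ ≤ Real.sqrt (S ^ 4 * T) := Real.sqrt_le_sqrt h4
    -- B bound
    have hB : B ≤ S ^ (2 * k) := aux_sum_pow Finset.univ (fun i => (W i - W₀ i) ^ 2)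
      (fun i _ => sq_nonneg _) (2 * k) (by omega)
    -- rewrite RHS
    have hsq8 : Real.sqrt S ^ 8 = S ^ 4 := by
      rw [show (8:ℕ) = 2 * 4 from rfl, pow_mul, Real.sq_sqrt hS0]
    have hsq4k : Real.sqrt S ^ (4 * k) = S ^ (2 * k) := by
      rw [show 4 * k = 2 * (2 * k) by ring, pow_mul, Real.sq_sqrt hS0]
    have hrhs1 : Real.sqrt ((1 / (m : ℝ)) * Real.sqrt S ^ 8 * ((1 / (m : ℝ)) * T)) =
        (1 / (m : ℝ)) * Real.sqrt (S ^ 4 * T) := by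
      rw [hsq8]
      rw [show (1 / (m : ℝ)) * S ^ 4 * ((1 / (m : ℝ)) * T) = (1 / (m:ℝ))^2 * (S ^ 4 * T) by ring]
      rw [Real.sqrt_mul (by positivity), Real.sqrt_sq (by positivity)]
    rw [hrhs1, hsq4k]
    calc (1 / (m : ℝ)) * ∑ i, (W i ^ k - W₀ i ^ k) ^ 4
        ≤ (1 / (m : ℝ)) * (K * (A + B)) := by
          exact mul_le_mul_of_nonneg_left hsum (by positivity)
      _ ≤ (1 / (m : ℝ)) * (K * (Real.sqrt (S ^ 4 * T) + S ^ (2 * k))) := by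
          have := add_le_add hCS hB
          exact mul_le_mul_of_nonneg_left (mul_le_mul_of_nonneg_left this hK0) (by positivity)
      _ = K * ((1 / (m : ℝ)) * Real.sqrt (S ^ 4 * T) + (1 / (m : ℝ)) * S ^ (2 * k)) := by ring
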